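/- arXiv:1302.1459 — 3 statements merged into one kernel-verified Lean document; each statement's English description precedes it below -/
import Mathlib

section
/- Let γ₀ > 0, n_R, n_D > 0, and g_SR, g_RD, g_RR > 0. Among all pairs (P_S, P_R) of nonnegative powers satisfying simultaneously g_RR P_R ≥ γ₀ (g_SR P_S + n_R) (IC condition), g_RD P_R ≥ γ₀ n_D, and g_SR P_S ≥ γ₀ n_R, the pair P_S* = γ₀ n_R / g_SR, P_R* = max{γ₀ n_D / g_RD, n_R γ₀ (γ₀+1) / g_RR} minimizes both P_S and P_R (i.e., any feasible pair (P_S, P_R) satisfies P_S ≥ P_S* and P_R ≥ P_R*). -/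
theorem stmt1_general (γ₀ nR nD gSR gRD gRR : ℝ)
    (hγ : 0 < γ₀)
    (hSR : 0 < gSR) (hRD : 0 < gRD) (hRR : 0 < gRR)
    (PS PR : ℝ)
    (hIC : gRR * PR ≥ γ₀ * (gSR * PS + nR))
    (hRDsnr : gRD * PR ≥ γ₀ * nD)
    (hSRsnr : gSR * PS ≥ γ₀ * nR) :
    PS ≥ γ₀ * nR / gSR ∧
    PR ≥ max (γ₀ * nD / gRD) (nR * γ₀ * (γ₀ + 1) / gRR) := by
  -- The relay must overpower the source's signal, which is itself at least `γ₀ * nR`.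
  have hICmin : nR * γ₀ * (γ₀ + 1) ≤ gRR * PR :=
    calc nR * γ₀ * (γ₀ + 1) = γ₀ * (γ₀ * nR + nR) := by ring
      _ ≤ γ₀ * (gSR * PS + nR) := by gcongr
      _ ≤ gRR * PR := hIC
  exact ⟨(div_le_iff₀ hSR).2 (by linarith),
    max_le ((div_le_iff₀ hRD).2 (by linarith)) ((div_le_iff₀' hRR).2 hICmin)⟩

theorem stmt1 (γ₀ nR nD gSR gRD gRR : ℝ)
    (hγ : 0 < γ₀) (hnR : 0 < nR) (hnD : 0 < nD)
    (hSR : 0 < gSR) (hRD : 0 < gRD) (hRR : 0 < gRR)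
    (PS PR : ℝ) (hPS0 : 0 ≤ PS) (hPR0 : 0 ≤ PR)
    (hIC : gRR * PR ≥ γ₀ * (gSR * PS + nR))
    (hRDsnr : gRD * PR ≥ γ₀ * nD)
    (hSRsnr : gSR * PS ≥ γ₀ * nR) :
    PS ≥ γ₀ * nR / gSR ∧
    PR ≥ max (γ₀ * nD / gRD) (nR * γ₀ * (γ₀ + 1) / gRR) :=
  stmt1_general γ₀ nR nD gSR gRD gRR hγ hSR hRD hRR PS PR hIC hRDsnr hSRsnr
end

section
/- Let 0 < γ₀ and suppose P_R† = γ₀ n_D / g_RD and P_S† = γ₀((g_RR/g_SR) P_R† + n_R/g_SR) are the minimal powers without IC, while P_S* = γ₀ n_R / g_SR and P_R* = max{γ₀ n_D / g_RD, n_R γ₀(γ₀+1)/g_RR} are the minimal powers with IC. Then P_S* ≤ P_S† and P_R* ≥ P_R†; consequently the comparison of total powers P_S* + P_R* versus P_S† + P_R† can go either way: there exist parameter values (g_SR, g_RD, g_RR, n_R, n_D, γ₀) for which P_S* + P_R* > P_S† + P_R†, and parameter values for which P_S* + P_R* < P_S† + P_R†. -/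
theorem mul_div_le_mul_add_div {K : Type*} [Field K] [LinearOrder K] [IsStrictOrderedRing K]
    {γ a n g : K} (hγ : 0 ≤ γ) (ha : 0 ≤ a) : γ * n / g ≤ γ * (a + n / g) := by
  rw [mul_div_assoc]
  exact mul_le_mul_of_nonneg_left (le_add_of_nonneg_left ha) hγ

theorem stmt4 :
    (∀ γ₀ nR nD gSR gRD gRR : ℝ,
      0 < γ₀ → 0 < nR → 0 < nD → 0 < gSR → 0 < gRD → 0 < gRR →
      γ₀ * nR / gSR ≤ γ₀ * ((gRR / gSR) * (γ₀ * nD / gRD) + nR / gSR) ∧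
      max (γ₀ * nD / gRD) (nR * γ₀ * (γ₀ + 1) / gRR) ≥ γ₀ * nD / gRD) ∧
    (∃ γ₀ nR nD gSR gRD gRR : ℝ,
      0 < γ₀ ∧ 0 < nR ∧ 0 < nD ∧ 0 < gSR ∧ 0 < gRD ∧ 0 < gRR ∧
      γ₀ * nR / gSR + max (γ₀ * nD / gRD) (nR * γ₀ * (γ₀ + 1) / gRR) >
        γ₀ * ((gRR / gSR) * (γ₀ * nD / gRD) + nR / gSR) + γ₀ * nD / gRD) ∧
    (∃ γ₀ nR nD gSR gRD gRR : ℝ,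
      0 < γ₀ ∧ 0 < nR ∧ 0 < nD ∧ 0 < gSR ∧ 0 < gRD ∧ 0 < gRR ∧
      γ₀ * nR / gSR + max (γ₀ * nD / gRD) (nR * γ₀ * (γ₀ + 1) / gRR) <
        γ₀ * ((gRR / gSR) * (γ₀ * nD / gRD) + nR / gSR) + γ₀ * nD / gRD) := by
  refine ⟨fun γ₀ nR nD gSR gRD gRR hγ _ hnD hSR hRD hRR =>
      ⟨mul_div_le_mul_add_div hγ.le (by positivity), le_max_left _ _⟩, ?_, ?_⟩
  -- With every other parameter equal to 1 the total powers are 1 + max 1 (2 / g_RR) with IC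
  -- and g_RR + 2 without, so IC costs power for small g_RR and saves it for large g_RR.
  · exact ⟨1, 1, 1, 1, 1, 1 / 10, one_pos, one_pos, one_pos, one_pos, one_pos, by norm_num,
      by norm_num⟩
  · exact ⟨1, 1, 1, 1, 1, 10, one_pos, one_pos, one_pos, one_pos, one_pos, by norm_num,
      by norm_num⟩
end

section
/- Let A ∈ ℝ^{m×m} be row-stochastic with a unique stationary vector π (Aπ = π, Σπᵢ = 1, πᵢ ≥ 0). If y is a row vector with y(A − I + B) = 0, where B is the all-ones matrix, then y = 0. -/
/-!
If `(A - 1 + J) v = 0`, where `J` is the all-ones matrix, then `A v = v - s • 1` with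
`s = ∑ i, v i`, hence `Aᵏ v = v - (k * s) • 1`. Row-stochastic matrices do not increase the
sup norm, so `s = 0` and `v` is a fixed vector of `A` with zero sum. The uniform distribution is
stationary, and so is its perturbation by a small multiple of `v`; uniqueness of the stationary
distribution forces `v = 0`. Thus `A - 1 + J` is invertible, and acts injectively on row vectors.
-/

open Matrix Filter Topology

namespace Matrix

variable {n : Type*} [Fintype n] {A : Matrix n n ℝ}

theorem eq_zero_of_mulVec_eq_self_of_sum_eq_zero {π q v : n → ℝ}
    (huniq : ∀ p : n → ℝ, A *ᵥ p = p → ∑ i, p i = 1 → (∀ i, 0 ≤ p i) → p = π)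
    (hq : A *ᵥ q = q) (hq_sum : ∑ i, q i = 1) (hq_pos : ∀ i, 0 < q i)
    (hv : A *ᵥ v = v) (hv_sum : ∑ i, v i = 0) : v = 0 := by
  have hpos_near : ∀ᶠ ε in 𝓝 (0 : ℝ), ∀ i, 0 < q i + ε * v i :=
    eventually_all.2 fun i => Tendsto.eventually_const_lt (by simpa using hq_pos i)
      (Continuous.tendsto (by fun_prop) 0)
  have hpos_punctured : ∀ᶠ ε in 𝓝[≠] (0 : ℝ), (∀ i, 0 < q i + ε * v i) ∧ ε ≠ 0 :=
    (eventually_nhdsWithin_of_eventually_nhds hpos_near).and self_mem_nhdsWithin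
  obtain ⟨ε, hε, hε_ne⟩ := hpos_punctured.exists
  have hperturbed : q + ε • v = π := huniq _
    (by rw [mulVec_add, mulVec_smul, hq, hv])
    (by simp [Finset.sum_add_distrib, ← Finset.mul_sum, hq_sum, hv_sum])
    (fun i => (hε i).le)
  have hεv : ε • v = 0 := by
    rwa [huniq q hq hq_sum (fun i => (hq_pos i).le), add_eq_left] at hperturbed
  exact (smul_eq_zero.1 hεv).resolve_left hε_ne

section RowStochastic

variable [DecidableEq n]

theorem norm_mulVec_le_of_mem_rowStochastic (hA : A ∈ rowStochastic ℝ n) (v : n → ℝ) :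
    ‖A *ᵥ v‖ ≤ ‖v‖ := by
  refine (pi_norm_le_iff_of_nonneg (norm_nonneg v)).2 fun i => ?_
  calc ‖(A *ᵥ v) i‖ = |∑ j, A i j * v j| := rfl
    _ ≤ ∑ j, |A i j * v j| := Finset.abs_sum_le_sum_abs _ _
    _ ≤ ∑ j, A i j * ‖v‖ := Finset.sum_le_sum fun j _ => by
        rw [abs_mul, abs_of_nonneg (hA.1 i j)]
        exact mul_le_mul_of_nonneg_left (norm_le_pi_norm v j) (hA.1 i j)
    _ = ‖v‖ := by rw [← Finset.sum_mul, sum_row_of_mem_rowStochastic hA, one_mul]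

theorem pow_mulVec_eq_add_smul_one (hA : A ∈ rowStochastic ℝ n) {v : n → ℝ} {c : ℝ}
    (h : A *ᵥ v = v + c • 1) (k : ℕ) : (A ^ k) *ᵥ v = v + (k * c) • 1 := by
  induction k with
  | zero => simp
  | succ k ih =>
    rw [pow_succ', ← mulVec_mulVec, ih, mulVec_add, mulVec_smul, h, hA.2]
    push_cast
    module

theorem eq_zero_of_mulVec_eq_add_smul_one [Nonempty n] (hA : A ∈ rowStochastic ℝ n)
    {v : n → ℝ} {c : ℝ} (h : A *ᵥ v = v + c • 1) : c = 0 := by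
  obtain ⟨i⟩ := ‹Nonempty n›
  have hbound (k : ℕ) : k * |c| ≤ 2 * ‖v‖ := by
    have hk := norm_mulVec_le_of_mem_rowStochastic (pow_mem hA k) v
    rw [pow_mulVec_eq_add_smul_one hA h] at hk
    have hki := (norm_le_pi_norm (v + (k * c) • 1) i).trans hk
    have hvi := norm_le_pi_norm v i
    simp only [Pi.add_apply, Pi.smul_apply, Pi.one_apply, smul_eq_mul, mul_one,
      Real.norm_eq_abs] at hki hvi
    calc k * |c| = |v i + k * c - v i| := by simp [abs_mul]
      _ ≤ |v i + k * c| + |v i| := abs_sub _ _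
      _ ≤ 2 * ‖v‖ := by linarith
  by_contra hc
  obtain ⟨k, hk⟩ := exists_nat_gt (2 * ‖v‖ / |c|)
  have := hbound k
  rw [div_lt_iff₀ (abs_pos.2 hc)] at hk
  linarith

theorem isUnit_sub_one_add_of_mem_rowStochastic (hA : A ∈ rowStochastic ℝ n) {π : n → ℝ}
    (huniq : ∀ p : n → ℝ, A *ᵥ p = p → ∑ i, p i = 1 → (∀ i, 0 ≤ p i) → p = π) :
    IsUnit (A - 1 + of fun _ _ => (1 : ℝ)) := by
  cases isEmpty_or_nonempty n
  · exact isUnit_of_subsingleton _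
  rw [← mulVec_injective_iff_isUnit, ← coe_mulVecLin, ← LinearMap.ker_eq_bot,
    LinearMap.ker_eq_bot']
  intro v hv
  have hones : (of fun _ _ : n => (1 : ℝ)) *ᵥ v = (∑ i, v i) • 1 := by
    ext i
    simp [mulVec, dotProduct]
  rw [coe_mulVecLin, add_mulVec, sub_mulVec, one_mulVec, hones] at hv
  have hAv : A *ᵥ v = v + (-∑ i, v i) • 1 := by linear_combination (norm := module) hv
  have hv_sum : ∑ i, v i = 0 := neg_eq_zero.1 (eq_zero_of_mulVec_eq_add_smul_one hA hAv)
  rw [hv_sum, neg_zero, zero_smul, add_zero] at hAv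
  refine eq_zero_of_mulVec_eq_self_of_sum_eq_zero huniq (q := (Fintype.card n : ℝ)⁻¹ • 1)
    ?_ ?_ (fun _ => by simp [Fintype.card_pos]) hAv hv_sum
  · rw [mulVec_smul, hA.2]
  · simp [Finset.card_univ]

end RowStochastic

end Matrix

theorem stmt6_general (m : ℕ) (A : Matrix (Fin m) (Fin m) ℝ)
    (hnonneg : ∀ i j, 0 ≤ A i j)
    (hrow : ∀ i, ∑ j, A i j = 1)
    (π : Fin m → ℝ)
    (huniq : ∀ π' : Fin m → ℝ,
      A.mulVec π' = π' → ∑ i, π' i = 1 → (∀ i, 0 ≤ π' i) → π' = π)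
    (B : Matrix (Fin m) (Fin m) ℝ) (hB : ∀ i j, B i j = 1)
    (y : Fin m → ℝ)
    (hy : Matrix.vecMul y (A - 1 + B) = 0) :
    y = 0 := by
  have hA : A ∈ rowStochastic ℝ (Fin m) := mem_rowStochastic_iff_sum.2 ⟨hnonneg, hrow⟩
  obtain rfl : B = of fun _ _ => 1 := ext hB
  have hinj := vecMul_injective_iff_isUnit.2 (isUnit_sub_one_add_of_mem_rowStochastic hA huniq)
  exact hinj (hy.trans (zero_vecMul _).symm)

theorem stmt6 (m : ℕ) (A : Matrix (Fin m) (Fin m) ℝ)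
    (hnonneg : ∀ i j, 0 ≤ A i j)
    (hrow : ∀ i, ∑ j, A i j = 1)
    (π : Fin m → ℝ)
    (hstat : A.mulVec π = π) (hsum : ∑ i, π i = 1) (hpos : ∀ i, 0 ≤ π i)
    (huniq : ∀ π' : Fin m → ℝ,
      A.mulVec π' = π' → ∑ i, π' i = 1 → (∀ i, 0 ≤ π' i) → π' = π)
    (B : Matrix (Fin m) (Fin m) ℝ) (hB : ∀ i j, B i j = 1)
    (y : Fin m → ℝ)
    (hy : Matrix.vecMul y (A - 1 + B) = 0) :
    y = 0 :=
  stmt6_general m A hnonneg hrow π huniq B hB y hy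
end
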